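/- arXiv:1905.04677 — 2 statements merged into one kernel-verified Lean document; each statement's English description precedes it below -/
import Mathlib

section
/- Let q be an odd prime power, k ≥ 2, ξ a non-square in F_q. Assuming the graph Γ^□(k,q) is vertex-transitive (its orthogonal group acts transitively on vertices), the neighborhood of every vertex of Γ^□(k,q) (k ≥ 3) induces a graph isomorphic to Γ^□(k-1,q), and hence by induction from the edgeless base case Γ^□(2,q), the graph Γ^□(k,q) contains no clique of size k. -/
open Finset

variable (F : Type) [Field F] [Fintype F]

instance {k : ℕ} : Finite (Projectivization F (Fin k → F)) :=
  Quotient.finite _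

noncomputable instance {k : ℕ} : Fintype (Projectivization F (Fin k → F)) := Fintype.ofFinite _

/-- The quadratic form `Q(x) = ξ x₁² + ∑_{i≥2} x_i²`. -/
def Qf (ξ : F) {k : ℕ} (x : Fin k → F) : F :=
  ∑ i : Fin k, (if (i : ℕ) = 0 then ξ else 1) * x i ^ 2

/-- The polarized bilinear form `β(x,y) = ξ x₁ y₁ + ∑_{i≥2} x_i y_i`. -/
def Bf (ξ : F) {k : ℕ} (x y : Fin k → F) : F :=
  ∑ i : Fin k, (if (i : ℕ) = 0 then ξ else 1) * x i * y i

/-- `X_□`: the set of points of `PG(k-1,q)` on which `Q` takes nonzero square values. -/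
def Xsq (ξ : F) (k : ℕ) : Set (Projectivization F (Fin k → F)) :=
  {v | Qf F ξ v.rep ≠ 0 ∧ IsSquare (Qf F ξ v.rep)}

/-- `X_⊠`: the set of points on which `Q` takes non-square values. -/
def Xns (ξ : F) (k : ℕ) : Set (Projectivization F (Fin k → F)) :=
  {v | ¬ IsSquare (Qf F ξ v.rep)}

/-- The graph `Γ^□(k,q)` on `X_□` with orthogonality adjacency. -/
def Gamma (ξ : F) (k : ℕ) : SimpleGraph (Xsq F ξ k) where
  Adj x y := x ≠ y ∧ Bf F ξ x.1.rep y.1.rep = 0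
  symm := by
    constructor
    rintro x y ⟨hne, h⟩
    refine ⟨hne.symm, ?_⟩
    rw [← h]
    exact Finset.sum_congr rfl fun i _ => by ring
  loopless := by constructor; rintro x ⟨hne, -⟩; exact hne rfl

noncomputable instance (ξ : F) (k : ℕ) : Fintype (Xsq F ξ k) := Fintype.ofFinite _
noncomputable instance (ξ : F) (k : ℕ) : DecidableRel (Gamma F ξ k).Adj := Classical.decRel _

/-!
Let `e = ⟨(0,…,0,1)⟩`. Its neighbours in `Γ^□(k+1,q)` are exactly the points with last
coordinate `0`, and dropping that coordinate preserves `Q` and `β`, so the neighbourhood of `e`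
is a copy of `Γ^□(k,q)`; vertex-transitivity moves any vertex to `e`. For `k = 2` the identity
`Q(a) Q(b) = β(a,b)² + ξ (a₁b₂ - a₂b₁)²` shows that two orthogonal vertices would make `ξ` a
square, so `Γ^□(2,q)` is edgeless. A `(k+1)`-clique of `Γ^□(k+1,q)` minus one of its vertices is
a `k`-clique in that vertex's neighbourhood, which gives the induction.
-/

namespace SimpleGraph

variable {V W : Type*} {G : SimpleGraph V} {H : SimpleGraph W}

def Iso.induceNeighborSet (g : G ≃g H) (v : V) :
    G.induce (G.neighborSet v) ≃g H.induce (H.neighborSet (g v)) :=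
  ⟨g.mapNeighborSet v, g.map_adj_iff⟩

theorem nonempty_iso_induce_neighborSet_of_transitive
    (htrans : ∀ x y : V, ∃ g : G ≃g G, g x = y) (x y : V) :
    Nonempty (G.induce (G.neighborSet x) ≃g G.induce (G.neighborSet y)) := by
  obtain ⟨g, rfl⟩ := htrans x y
  exact ⟨g.induceNeighborSet x⟩

theorem cliqueFree_succ_of_forall_cliqueFree_induce_neighborSet {n : ℕ}
    (h : ∀ v, (G.induce (G.neighborSet v)).CliqueFree n) : G.CliqueFree (n + 1) := by
  classical
  intro s hs
  obtain ⟨a, ha⟩ : s.Nonempty := Finset.card_pos.1 (by rw [hs.card_eq]; omega)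
  refine (G.cliqueFree_induce_iff _ _).1 (h a) (fun b hb => ?_) (hs.erase_of_mem ha)
  obtain ⟨hba, hbs⟩ := Finset.mem_erase.1 (Finset.mem_coe.1 hb)
  exact hs.isClique ha hbs hba.symm

end SimpleGraph

namespace Projectivization

variable {K V W : Type*} [Field K] [AddCommGroup V] [Module K V] [AddCommGroup W] [Module K W]

theorem exists_smul_eq_rep_map (f : V →ₗ[K] W) (hf : Function.Injective f)
    (p : Projectivization K V) :
    ∃ a : Kˣ, a • f p.rep = (map f hf p).rep := by
  obtain ⟨a, ha⟩ := exists_smul_eq_mk_rep K (f p.rep) (map_zero f ▸ hf.ne p.rep_nonzero)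
  refine ⟨a, ha.trans ?_⟩
  rw [← map_mk f hf p.rep p.rep_nonzero, mk_rep]

end Projectivization

section Forms

variable {F : Type} [Field F] (ξ : F) {m : ℕ}

theorem Bf_self (x : Fin m → F) : Bf F ξ x x = Qf F ξ x :=
  Finset.sum_congr rfl fun _ _ => by ring

theorem Qf_smul (c : F) (x : Fin m → F) : Qf F ξ (c • x) = c ^ 2 * Qf F ξ x := by
  simp only [Qf, Finset.mul_sum, Pi.smul_apply, smul_eq_mul]
  exact Finset.sum_congr rfl fun _ _ => by ring

theorem Bf_smul_smul (a b : F) (x y : Fin m → F) :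
    Bf F ξ (a • x) (b • y) = a * b * Bf F ξ x y := by
  simp only [Bf, Finset.mul_sum, Pi.smul_apply, smul_eq_mul]
  exact Finset.sum_congr rfl fun _ _ => by ring

theorem Bf_snoc (hm : m ≠ 0) (x y : Fin m → F) (s t : F) :
    Bf F ξ (Fin.snoc x s) (Fin.snoc y t) = Bf F ξ x y + s * t := by
  simp only [Bf, Fin.sum_univ_castSucc, Fin.snoc_castSucc, Fin.snoc_last, Fin.val_castSucc,
    Fin.val_last, hm, if_false, one_mul]

theorem Qf_snoc (hm : m ≠ 0) (x : Fin m → F) (t : F) :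
    Qf F ξ (Fin.snoc x t) = Qf F ξ x + t ^ 2 := by
  rw [← Bf_self, ← Bf_self, Bf_snoc ξ hm, sq]

theorem Bf_single_last (hm : m ≠ 0) (y : Fin (m + 1) → F) :
    Bf F ξ (Pi.single (Fin.last m) 1) y = y (Fin.last m) := by
  simp [Bf, Pi.single_apply, hm]

theorem Qf_mul_Qf_fin_two (x y : Fin 2 → F) :
    Qf F ξ x * Qf F ξ y = Bf F ξ x y ^ 2 + ξ * (x 0 * y 1 - x 1 * y 0) ^ 2 := by
  simp only [Qf, Bf, Fin.sum_univ_two, Fin.val_eq_zero_iff, Fin.isValue, ite_mul, one_mul,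
    ↓reduceIte, one_ne_zero]
  ring

end Forms

section Vertices

variable {F : Type} [Field F] {ξ : F} {m : ℕ}

theorem mem_Xsq_iff_of_smul_eq_rep {p : Projectivization F (Fin m → F)} {x : Fin m → F}
    (a : Fˣ) (h : a • x = p.rep) : p ∈ Xsq F ξ m ↔ Qf F ξ x ≠ 0 ∧ IsSquare (Qf F ξ x) := by
  change Qf F ξ _ ≠ 0 ∧ IsSquare (Qf F ξ _) ↔ _
  have ha : (a : F) ^ 2 ≠ 0 := pow_ne_zero 2 a.ne_zero
  rw [← h, Units.smul_def, Qf_smul]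
  refine and_congr (mul_ne_zero_iff_left ha) ⟨fun hsq => ?_, (IsSquare.sq _).mul⟩
  simpa [ha] using hsq.div (IsSquare.sq (a : F))

theorem mk_mem_Xsq_iff {x : Fin m → F} (hx : x ≠ 0) :
    Projectivization.mk F x hx ∈ Xsq F ξ m ↔ Qf F ξ x ≠ 0 ∧ IsSquare (Qf F ξ x) :=
  let ⟨a, h⟩ := Projectivization.exists_smul_eq_mk_rep F x hx
  mem_Xsq_iff_of_smul_eq_rep a h

theorem Gamma_adj_iff {a b : Xsq F ξ m} : (Gamma F ξ m).Adj a b ↔ Bf F ξ a.1.rep b.1.rep = 0 :=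
  ⟨And.right, fun h => ⟨by rintro rfl; exact a.2.1 (by rwa [Bf_self] at h), h⟩⟩

theorem Gamma_adj_iff_of_smul_eq_rep {a b : Xsq F ξ m} {x y : Fin m → F} (α β : Fˣ)
    (hx : α • x = a.1.rep) (hy : β • y = b.1.rep) :
    (Gamma F ξ m).Adj a b ↔ Bf F ξ x y = 0 := by
  rw [Gamma_adj_iff, ← hx, ← hy, Units.smul_def, Units.smul_def, Bf_smul_smul]
  simp

end Vertices

theorem Gamma_two_eq_bot {F : Type} [Field F] {ξ : F} (hξ : ¬ IsSquare ξ) : Gamma F ξ 2 = ⊥ := by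
  ext a b
  rw [SimpleGraph.bot_adj, iff_false, Gamma_adj_iff]
  intro hB
  obtain ⟨ha0, ha⟩ := a.2
  obtain ⟨hb0, hb⟩ := b.2
  have hprod := Qf_mul_Qf_fin_two ξ a.1.rep b.1.rep
  set d := a.1.rep 0 * b.1.rep 1 - a.1.rep 1 * b.1.rep 0
  rw [hB, zero_pow two_ne_zero, zero_add] at hprod
  have hd : d ^ 2 ≠ 0 := right_ne_zero_of_mul (hprod ▸ mul_ne_zero ha0 hb0)
  apply hξ
  simpa [hprod, hd] using (ha.mul hb).div (IsSquare.sq d)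

section Neighborhood

variable {F : Type} [Field F] {ξ : F} {m : ℕ}

def snocZero (F : Type) [Field F] (m : ℕ) : (Fin m → F) →ₗ[F] (Fin (m + 1) → F) where
  toFun x := Fin.snoc x 0
  map_add' x y := by ext i; refine Fin.lastCases ?_ (fun j => ?_) i <;> simp
  map_smul' c x := by ext i; refine Fin.lastCases ?_ (fun j => ?_) i <;> simp

theorem snocZero_apply (x : Fin m → F) : snocZero F m x = Fin.snoc x 0 := rfl

theorem snocZero_injective : Function.Injective (snocZero F m) := fun x y h => by
  simpa [snocZero_apply] using congrArg Fin.init h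

def padVertex (hm : m ≠ 0) (v : Xsq F ξ m) : Xsq F ξ (m + 1) :=
  ⟨Projectivization.map (snocZero F m) snocZero_injective v.1, by
    obtain ⟨a, ha⟩ := Projectivization.exists_smul_eq_rep_map _ snocZero_injective v.1
    rw [mem_Xsq_iff_of_smul_eq_rep a ha, snocZero_apply, Qf_snoc ξ hm, sq, mul_zero, add_zero]
    exact v.2⟩

theorem Gamma_adj_padVertex_iff (hm : m ≠ 0) {a b : Xsq F ξ m} :
    (Gamma F ξ (m + 1)).Adj (padVertex hm a) (padVertex hm b) ↔ (Gamma F ξ m).Adj a b := by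
  obtain ⟨α, hα⟩ := Projectivization.exists_smul_eq_rep_map _ snocZero_injective a.1
  obtain ⟨β, hβ⟩ := Projectivization.exists_smul_eq_rep_map _ snocZero_injective b.1
  rw [Gamma_adj_iff_of_smul_eq_rep (a := padVertex hm a) (b := padVertex hm b) α β hα hβ,
    snocZero_apply, snocZero_apply, Bf_snoc ξ hm, mul_zero, add_zero, Gamma_adj_iff]

def padEmbedding (hm : m ≠ 0) : Gamma F ξ m ↪g Gamma F ξ (m + 1) where
  toFun := padVertex hm
  inj' _ _ h :=
    Subtype.ext (Projectivization.map_injective _ snocZero_injective (congrArg Subtype.val h))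
  map_rel_iff' := Gamma_adj_padVertex_iff hm

def lastBasisVertex (hm : m ≠ 0) : Xsq F ξ (m + 1) :=
  ⟨Projectivization.mk F (Pi.single (Fin.last m) 1) (by simp), (mk_mem_Xsq_iff _).2 (by
    rw [← Bf_self, Bf_single_last ξ hm, Pi.single_eq_same]
    exact ⟨one_ne_zero, IsSquare.one⟩)⟩

theorem mem_neighborSet_lastBasisVertex_iff (hm : m ≠ 0) {w : Xsq F ξ (m + 1)} :
    w ∈ (Gamma F ξ (m + 1)).neighborSet (lastBasisVertex hm) ↔ w.1.rep (Fin.last m) = 0 := by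
  obtain ⟨α, hα⟩ := Projectivization.exists_smul_eq_mk_rep F
    (Pi.single (Fin.last m) 1 : Fin (m + 1) → F) (by simp)
  rw [SimpleGraph.mem_neighborSet, Gamma_adj_iff_of_smul_eq_rep (a := lastBasisVertex hm) (b := w)
    α 1 hα (one_smul _ _), Bf_single_last ξ hm]

theorem range_padEmbedding (hm : m ≠ 0) :
    Set.range (padEmbedding (ξ := ξ) hm) =
      (Gamma F ξ (m + 1)).neighborSet (lastBasisVertex hm) := by
  ext w
  rw [mem_neighborSet_lastBasisVertex_iff]
  constructor
  · rintro ⟨v, rfl⟩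
    obtain ⟨α, hα⟩ := Projectivization.exists_smul_eq_rep_map _ snocZero_injective v.1
    show (Projectivization.map (snocZero F m) snocZero_injective v.1).rep (Fin.last m) = 0
    simp [← hα, snocZero_apply]
  · intro h0
    set x := Fin.init w.1.rep
    have hx : snocZero F m x = w.1.rep := by
      rw [snocZero_apply, ← h0]
      exact Fin.snoc_init_self _
    have hx0 : x ≠ 0 := by
      rintro hx0
      exact w.1.rep_nonzero (by rw [← hx, hx0, map_zero])
    have hw : Qf F ξ w.1.rep ≠ 0 ∧ IsSquare (Qf F ξ w.1.rep) := w.2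
    rw [← hx, snocZero_apply, Qf_snoc ξ hm, sq, mul_zero, add_zero] at hw
    refine ⟨⟨Projectivization.mk F x hx0, (mk_mem_Xsq_iff hx0).2 hw⟩, Subtype.ext ?_⟩
    show Projectivization.map _ snocZero_injective (Projectivization.mk F x hx0) = w.1
    simp only [Projectivization.map_mk, hx, Projectivization.mk_rep]

theorem nonempty_induce_neighborSet_lastBasisVertex_iso (hm : m ≠ 0) :
    Nonempty ((Gamma F ξ (m + 1)).induce ((Gamma F ξ (m + 1)).neighborSet (lastBasisVertex hm))
      ≃g Gamma F ξ m) := by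
  rw [← range_padEmbedding hm]
  exact ⟨(padEmbedding hm).isoInduceRange.symm⟩

theorem nonempty_induce_neighborSet_iso_Gamma (hm : m ≠ 0)
    (htrans : ∀ x y : Xsq F ξ (m + 1), ∃ g : Gamma F ξ (m + 1) ≃g Gamma F ξ (m + 1), g x = y)
    (x : Xsq F ξ (m + 1)) :
    Nonempty ((Gamma F ξ (m + 1)).induce ((Gamma F ξ (m + 1)).neighborSet x) ≃g Gamma F ξ m) := by
  obtain ⟨φ⟩ :=
    SimpleGraph.nonempty_iso_induce_neighborSet_of_transitive htrans x (lastBasisVertex hm)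
  obtain ⟨ψ⟩ := nonempty_induce_neighborSet_lastBasisVertex_iso (ξ := ξ) hm
  exact ⟨ψ.comp φ⟩

end Neighborhood

theorem stmt_8_general {F : Type} [Field F]
    (ξ : F) (hξ : ¬ IsSquare ξ) (k : ℕ) (hk : 2 ≤ k)
    (htrans : ∀ j : ℕ, 2 ≤ j → ∀ x y : Xsq F ξ j,
      ∃ g : Gamma F ξ j ≃g Gamma F ξ j, g x = y) :
    (3 ≤ k → ∀ x₀ : Xsq F ξ k,
      Nonempty
        ((SimpleGraph.induce ((Gamma F ξ k).neighborSet x₀) (Gamma F ξ k)) ≃g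
          Gamma F ξ (k - 1))) ∧
    (Gamma F ξ k).CliqueFree k := by
  refine ⟨fun hk3 x₀ => ?_, ?_⟩
  · obtain ⟨m, rfl⟩ : ∃ m, k = m + 1 := ⟨k - 1, by omega⟩
    exact nonempty_induce_neighborSet_iso_Gamma (by omega) (htrans _ hk) x₀
  · induction k, hk using Nat.le_induction with
    | base =>
      rw [Gamma_two_eq_bot hξ]
      exact SimpleGraph.cliqueFree_bot le_rfl
    | succ n hn ih =>
      refine SimpleGraph.cliqueFree_succ_of_forall_cliqueFree_induce_neighborSet fun v => ?_
      obtain ⟨φ⟩ := nonempty_induce_neighborSet_iso_Gamma (by omega) (htrans _ (by omega)) v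
      exact ih.comap φ.toEmbedding.isContained

/-- Assuming the graphs `Γ^□(j,q)` are vertex-transitive, the neighborhood of every
vertex of `Γ^□(k,q)` (`k ≥ 3`) induces a subgraph isomorphic to `Γ^□(k-1,q)`, and hence,
by induction from the edgeless base case `Γ^□(2,q)`, the graph `Γ^□(k,q)` contains no
clique of size `k`. -/
theorem stmt_8 {F : Type} [Field F] [Fintype F] (hodd : Odd (Fintype.card F))
    (ξ : F) (hξ : ¬ IsSquare ξ) (k : ℕ) (hk : 2 ≤ k)
    (htrans : ∀ j : ℕ, 2 ≤ j → ∀ x y : Xsq F ξ j,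
      ∃ g : Gamma F ξ j ≃g Gamma F ξ j, g x = y) :
    (3 ≤ k → ∀ x₀ : Xsq F ξ k,
      Nonempty
        ((SimpleGraph.induce ((Gamma F ξ k).neighborSet x₀) (Gamma F ξ k)) ≃g
          Gamma F ξ (k - 1))) ∧
    (Gamma F ξ k).CliqueFree k :=
  stmt_8_general ξ hξ k hk htrans
end

section
/- Any K_k-free d-regular graph on n vertices whose adjacency eigenvalues other than d are at most λ in absolute value, with λ ≤ C√d for a constant C and d ≤ n/2, satisfies d/n = O(n^{-1/(2k-3)}) (constant depending on k and C). -/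
/-!
Write `ρ = d/n` for the edge density. Since every eigenvalue of the adjacency matrix `A` is at
least `-λ`, the quadratic form of `A` is bounded below by `-λ‖x‖²`; applied to `1_U - (|U|/n)·1`
this is the one-sided expander mixing lemma: `U` spans at least `ρ|U|² - λ|U|` ordered edges, so
some vertex of `U` has at least `ρ|U| - λ` neighbours in `U`. Starting from `U = V` and
repeatedly passing to the neighbourhood inside `U` of such a vertex builds an `i`-clique together
with `≥ ρⁱn - 2λ` common neighbours (the loss stays `2λ` because `ρ ≤ 1/2`). As long as this is
positive the clique extends, so `K_k`-freeness forces `ρ^(k-1) n ≤ 2λ ≤ 2C√(ρn)`, which solves to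
`ρ ≤ (2C)^(2/(2k-3)) n^(-1/(2k-3))`.
-/

open Matrix Finset

namespace Matrix

variable {n : Type*} [Fintype n] {A : Matrix n n ℝ}

theorem IsHermitian.posSemidef_sub_smul_one [DecidableEq n] (hA : A.IsHermitian) {c : ℝ}
    (h : ∀ (μ : ℝ) (v : n → ℝ), v ≠ 0 → A *ᵥ v = μ • v → c ≤ μ) : (A - c • 1).PosSemidef := by
  have hB : (A - c • 1).IsHermitian := hA.sub (isHermitian_one.smul (IsSelfAdjoint.all c))
  refine hB.posSemidef_iff_eigenvalues_nonneg.mpr fun i => ?_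
  have hv := hB.mulVec_eigenvectorBasis i
  rw [sub_mulVec, smul_mulVec, one_mulVec, sub_eq_iff_eq_add, ← add_smul] at hv
  have hne : ⇑(hB.eigenvectorBasis i) ≠ 0 := fun h0 =>
    hB.eigenvectorBasis.orthonormal.ne_zero i (by ext j; exact congrFun h0 j)
  have := h _ _ hne hv
  simp only [Pi.zero_apply]
  linarith

theorem IsHermitian.smul_dotProduct_le (hA : A.IsHermitian) {c : ℝ}
    (h : ∀ (μ : ℝ) (v : n → ℝ), v ≠ 0 → A *ᵥ v = μ • v → c ≤ μ) (x : n → ℝ) :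
    c * (x ⬝ᵥ x) ≤ x ⬝ᵥ (A *ᵥ x) := by
  classical
  have := (hA.posSemidef_sub_smul_one h).dotProduct_mulVec_nonneg x
  rw [star_trivial, sub_mulVec, dotProduct_sub, smul_mulVec, one_mulVec, dotProduct_smul,
    smul_eq_mul] at this
  linarith

end Matrix

namespace SimpleGraph

variable {V : Type*} [Fintype V] {G : SimpleGraph V} [DecidableRel G.Adj] {d : ℕ} {lam : ℝ}

theorem IsRegularOfDegree.adjMatrix_mulVec_one {α : Type*} [NonAssocSemiring α]
    (hreg : G.IsRegularOfDegree d) : G.adjMatrix α *ᵥ 1 = (d : α) • 1 := by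
  ext v
  simp [adjMatrix_mulVec_apply, hreg v]

theorem IsRegularOfDegree.one_vecMul_adjMatrix {α : Type*} [NonAssocSemiring α]
    (hreg : G.IsRegularOfDegree d) : 1 ᵥ* G.adjMatrix α = (d : α) • 1 := by
  ext v
  simp [adjMatrix_vecMul_apply, hreg v]

theorem indicator_dotProduct_adjMatrix_mulVec {α : Type*} [NonAssocSemiring α] [DecidableEq V]
    (U : Finset V) :
    (fun v => if v ∈ U then (1 : α) else 0) ⬝ᵥ
        (G.adjMatrix α *ᵥ fun v => if v ∈ U then 1 else 0) =
      ∑ v ∈ U, (#(U.filter (G.Adj v)) : α) := by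
  simp only [dotProduct, adjMatrix_mulVec_apply, boole_mul, sum_ite_mem, univ_inter, sum_const,
    nsmul_one]
  refine sum_congr rfl fun v _ => ?_
  congr 2
  ext w
  simp [and_comm]

theorem IsRegularOfDegree.le_sum_card_filter_adj (hreg : G.IsRegularOfDegree d)
    (hlam : 0 ≤ lam) (hquad : ∀ x : V → ℝ, -lam * (x ⬝ᵥ x) ≤ x ⬝ᵥ (G.adjMatrix ℝ *ᵥ x))
    (U : Finset V) :
    d / Fintype.card V * #U ^ 2 - lam * #U ≤ ∑ v ∈ U, (#(U.filter (G.Adj v)) : ℝ) := by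
  classical
  set n : ℝ := (Fintype.card V : ℝ)
  set u : ℝ := (#U : ℝ)
  set x : V → ℝ := fun v => if v ∈ U then 1 else 0
  set c : ℝ := u / n
  have hcn : c * n = u := by
    rcases eq_or_ne n 0 with hn | hn
    · have : u ≤ n := by simp only [u, n]; exact_mod_cast card_le_univ U
      have : 0 ≤ u := by positivity
      simp only [c, hn, div_zero, zero_mul]
      linarith
    · exact div_mul_cancel₀ u hn
  have hxx : x ⬝ᵥ x = u := by simp [x, dotProduct, u]
  have hx1 : x ⬝ᵥ 1 = u := by simp [x, dotProduct_one, u]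
  have h1x : 1 ⬝ᵥ x = u := by simp [x, one_dotProduct, u]
  have h11 : (1 : V → ℝ) ⬝ᵥ 1 = n := by simp [n]
  have hyy : (x - c • 1) ⬝ᵥ (x - c • 1) = u - c * u := by
    simp only [sub_dotProduct, dotProduct_sub, smul_dotProduct, dotProduct_smul, smul_eq_mul,
      hxx, hx1, h1x, h11]
    linear_combination c * hcn
  have hyAy : (x - c • 1) ⬝ᵥ (G.adjMatrix ℝ *ᵥ (x - c • 1)) =
      x ⬝ᵥ (G.adjMatrix ℝ *ᵥ x) - c * d * u := by
    simp only [mulVec_sub, mulVec_smul, hreg.adjMatrix_mulVec_one, sub_dotProduct,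
      dotProduct_sub, smul_dotProduct, dotProduct_smul, smul_eq_mul, dotProduct_mulVec 1,
      hreg.one_vecMul_adjMatrix, hx1, h1x, h11]
    linear_combination c * d * hcn
  have hmix := hquad (x - c • 1)
  rw [hyy, hyAy, indicator_dotProduct_adjMatrix_mulVec] at hmix
  have : 0 ≤ lam * (c * u) := by positivity
  calc (d : ℝ) / n * u ^ 2 - lam * u = c * d * u - lam * u := by ring
    _ ≤ _ := by linarith

theorem IsRegularOfDegree.exists_le_card_filter_adj (hreg : G.IsRegularOfDegree d)
    (hlam : 0 ≤ lam) (hquad : ∀ x : V → ℝ, -lam * (x ⬝ᵥ x) ≤ x ⬝ᵥ (G.adjMatrix ℝ *ᵥ x))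
    {U : Finset V} (hU : U.Nonempty) :
    ∃ v ∈ U, d / Fintype.card V * #U - lam ≤ #(U.filter (G.Adj v)) := by
  refine exists_le_of_sum_le hU ?_
  rw [sum_const, nsmul_eq_mul]
  linarith [hreg.le_sum_card_filter_adj hlam hquad U]

theorem IsRegularOfDegree.exists_isNClique_with_common_neighbors (hreg : G.IsRegularOfDegree d)
    (hlam : 0 ≤ lam) (hquad : ∀ x : V → ℝ, -lam * (x ⬝ᵥ x) ≤ x ⬝ᵥ (G.adjMatrix ℝ *ᵥ x))
    (hd : (d : ℝ) / Fintype.card V ≤ 1 / 2) :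
    ∀ i : ℕ, 2 * lam < (d / Fintype.card V) ^ i * Fintype.card V →
      ∃ S U : Finset V, G.IsNClique i S ∧ (∀ u ∈ U, ∀ s ∈ S, G.Adj u s) ∧
        (d / Fintype.card V) ^ i * Fintype.card V - 2 * lam ≤ #U := by
  classical
  set n : ℝ := (Fintype.card V : ℝ)
  set ρ : ℝ := d / n
  have hρ : 0 ≤ ρ := by positivity
  intro i
  induction i with
  | zero =>
    intro _
    exact ⟨∅, univ, by simp, by simp, by simp [n]; linarith⟩
  | succ i ih =>
    intro hi
    have hi' : 2 * lam < ρ ^ i * n := by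
      calc 2 * lam < ρ ^ (i + 1) * n := hi
        _ ≤ ρ ^ i * n := mul_le_mul_of_nonneg_right
          (pow_le_pow_of_le_one hρ (by linarith) i.le_succ) (by positivity)
    obtain ⟨S, U, hS, hSU, hU⟩ := ih hi'
    obtain ⟨v, hvU, hv⟩ := hreg.exists_le_card_filter_adj hlam hquad
      (card_pos.mp (by exact_mod_cast (by linarith : (0 : ℝ) < #U)))
    refine ⟨insert v S, U.filter (G.Adj v), hS.insert fun s hs => hSU v hvU s hs, ?_, ?_⟩
    · intro u hu s hs
      rw [mem_filter] at hu
      obtain rfl | hs := mem_insert.mp hs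
      · exact hu.2.symm
      · exact hSU u hu.1 s hs
    · calc ρ ^ (i + 1) * n - 2 * lam ≤ ρ * (ρ ^ i * n - 2 * lam) - lam := by
            rw [pow_succ]; nlinarith
        _ ≤ ρ * #U - lam := by gcongr
        _ ≤ #(U.filter (G.Adj v)) := hv

theorem IsRegularOfDegree.not_cliqueFree_of_two_mul_lt (hreg : G.IsRegularOfDegree d)
    (hlam : 0 ≤ lam) (hquad : ∀ x : V → ℝ, -lam * (x ⬝ᵥ x) ≤ x ⬝ᵥ (G.adjMatrix ℝ *ᵥ x))
    (hd : (d : ℝ) / Fintype.card V ≤ 1 / 2) {i : ℕ}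
    (hi : 2 * lam < (d / Fintype.card V) ^ i * Fintype.card V) : ¬ G.CliqueFree (i + 1) := by
  classical
  obtain ⟨S, U, hS, hSU, hU⟩ := hreg.exists_isNClique_with_common_neighbors hlam hquad hd i hi
  obtain ⟨v, hvU⟩ : U.Nonempty :=
    card_pos.mp (by exact_mod_cast (by linarith : (0 : ℝ) < #U))
  exact fun hfree => hfree _ (hS.insert fun s hs => hSU v hvU s hs)

end SimpleGraph

theorem le_rpow_of_pow_mul_le_mul_sqrt {ρ n c : ℝ} {k : ℕ} (hk : 2 ≤ k) (hρ : 0 ≤ ρ)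
    (hn : 0 < n) (hc : 0 ≤ c) (h : ρ ^ (k - 1) * n ≤ c * √(ρ * n)) :
    ρ ≤ c ^ (2 / (2 * (k : ℝ) - 3)) * n ^ (-(1 : ℝ) / (2 * (k : ℝ) - 3)) := by
  set e : ℕ := 2 * k - 3
  have he : (e : ℝ) = 2 * (k : ℝ) - 3 := by
    simp only [e]; rw [Nat.cast_sub (by omega)]; push_cast; ring
  have he0 : e ≠ 0 := by omega
  have hsq : (ρ ^ (k - 1) * n) ^ 2 ≤ c ^ 2 * (ρ * n) := by
    calc (ρ ^ (k - 1) * n) ^ 2 ≤ (c * √(ρ * n)) ^ 2 := pow_le_pow_left₀ (by positivity) h 2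
      _ = c ^ 2 * (ρ * n) := by rw [mul_pow, Real.sq_sqrt (by positivity)]
  have hpow : ρ ^ e * n ≤ c ^ 2 := by
    rcases hρ.eq_or_lt with rfl | hρ
    · rw [zero_pow he0, zero_mul]; positivity
    · refine le_of_mul_le_mul_left ?_ (mul_pos hρ hn)
      calc ρ * n * (ρ ^ e * n) = (ρ ^ (k - 1) * n) ^ 2 := by
            rw [mul_pow, ← pow_mul, show (k - 1) * 2 = e + 1 by omega, pow_succ]; ring
        _ ≤ c ^ 2 * (ρ * n) := hsq
        _ = ρ * n * c ^ 2 := by ring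
  calc ρ = (ρ ^ e) ^ (e⁻¹ : ℝ) := (Real.pow_rpow_inv_natCast hρ he0).symm
    _ ≤ (c ^ 2 * n⁻¹) ^ (e⁻¹ : ℝ) := by gcongr; exact (le_mul_inv_iff₀ hn).mpr hpow
    _ = c ^ (2 / (2 * (k : ℝ) - 3)) * n ^ (-(1 : ℝ) / (2 * (k : ℝ) - 3)) := by
      rw [Real.mul_rpow (by positivity) (by positivity), ← Real.rpow_natCast c 2,
        ← Real.rpow_mul hc, Real.inv_rpow hn.le, ← Real.rpow_neg hn.le, he]
      ring_nf

/-- Any `K_k`-free `d`-regular graph on `n` vertices whose adjacency eigenvalues other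
than `d` are at most `λ ≤ C√d` in absolute value, with `d ≤ n/2`, has edge density
`d/n = O(n^{-1/(2k-3)})`, the implied constant depending only on `k` and `C`. -/
theorem stmt_18 (k : ℕ) (hk : 3 ≤ k) (C : ℝ) (hC : 0 < C) :
    ∃ K : ℝ, 0 < K ∧
      ∀ (V : Type) [Fintype V] (G : SimpleGraph V) [DecidableRel G.Adj] (d : ℕ) (lam : ℝ),
        G.CliqueFree k →
        G.IsRegularOfDegree d →
        d ≤ Fintype.card V / 2 →
        (∀ mu : ℝ, (∃ v, v ≠ 0 ∧ (SimpleGraph.adjMatrix ℝ G).mulVec v = mu • v) →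
          mu = d ∨ |mu| ≤ lam) →
        lam ≤ C * Real.sqrt d →
        (d : ℝ) / Fintype.card V ≤
          K * (Fintype.card V : ℝ) ^ (-(1 : ℝ) / (2 * (k : ℝ) - 3)) := by
  refine ⟨(2 * C) ^ (2 / (2 * (k : ℝ) - 3)), by positivity, ?_⟩
  intro V _ G _ d lam hfree hreg hd hspec hlamC
  obtain hV | hV := (Fintype.card V).eq_zero_or_pos
  · have : (3 : ℝ) ≤ k := by exact_mod_cast hk
    rw [hV, Nat.cast_zero, div_zero, Real.zero_rpow (div_ne_zero (by norm_num) (by linarith)),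
      mul_zero]
  -- `λ` may be negative; `max λ 0` is an equally valid spectral bound.
  have hquad : ∀ x : V → ℝ, -max lam 0 * (x ⬝ᵥ x) ≤ x ⬝ᵥ (G.adjMatrix ℝ *ᵥ x) :=
    (G.isHermitian_adjMatrix ℝ).smul_dotProduct_le fun μ v hv hμ => by
      rcases hspec μ ⟨v, hv, hμ⟩ with rfl | hμ
      · linarith [le_max_right lam 0, Nat.cast_nonneg (α := ℝ) d]
      · linarith [neg_abs_le μ, le_max_left lam 0]
  have hρ : (d : ℝ) / Fintype.card V ≤ 1 / 2 := by
    rw [div_le_iff₀ (by positivity)]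
    have : 2 * d ≤ Fintype.card V := by omega
    have : (2 * d : ℝ) ≤ Fintype.card V := by exact_mod_cast this
    linarith
  have hsmall : ((d : ℝ) / Fintype.card V) ^ (k - 1) * Fintype.card V ≤ 2 * max lam 0 := by
    by_contra! h
    exact hreg.not_cliqueFree_of_two_mul_lt (le_max_right _ _) hquad hρ h
      (by rwa [Nat.sub_add_cancel (by omega)])
  refine le_rpow_of_pow_mul_le_mul_sqrt (by omega) (by positivity) (by positivity)
    (by positivity) ?_
  calc _ ≤ 2 * max lam 0 := hsmall
    _ ≤ 2 * C * √d := by linarith [max_le hlamC (by positivity : 0 ≤ C * √d)]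
    _ = 2 * C * √(d / Fintype.card V * Fintype.card V) := by
      rw [div_mul_cancel₀ _ (by positivity)]
end
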